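/- Let Y be finite and suppose two softmax models coincide: exp(f_x(x)ᵀ f_y(y))/Z(x) = exp(g_x(x)ᵀ g_y(y))/Z'(x) for all x, y. Then for all x, y, y₀: (f_y(y) − f_y(y₀))ᵀ f_x(x) = (g_y(y) − g_y(y₀))ᵀ g_x(x). If moreover there exist y₀,…,y_d making the matrix of differences f_y(y_i) − f_y(y₀) invertible (d the common dimension), then f_x(x) = B g_x(x) for a fixed matrix B independent of x. -/
import Mathlib


open Real Matrix

/-- inference-space linear identifiability: if two softmax
models coincide, their difference-logits agree; moreover, under the diversity
condition there is a fixed matrix B with f_x(x) = B g_x(x) for all x. -/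
theorem stmt14 {X Y : Type*} [Fintype Y] [Nonempty Y] {d : ℕ}
    (fx gx : X → Fin d → ℝ) (fy gy : Y → Fin d → ℝ)
    (h : ∀ x y,
      Real.exp (dotProduct (fx x) (fy y)) /
          (∑ y', Real.exp (dotProduct (fx x) (fy y')))
        = Real.exp (dotProduct (gx x) (gy y)) /
          (∑ y', Real.exp (dotProduct (gx x) (gy y')))) :
    (∀ x (y y₀ : Y),
      dotProduct (fy y - fy y₀) (fx x) = dotProduct (gy y - gy y₀) (gx x)) ∧
    (∀ ys : Fin (d + 1) → Y,
      IsUnit (Matrix.of fun i j : Fin d => fy (ys j.succ) i - fy (ys 0) i).det →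
      ∃ B : Matrix (Fin d) (Fin d) ℝ, ∀ x, fx x = B *ᵥ gx x) := by
  have key : ∀ x (y y₀ : Y),
      dotProduct (fy y - fy y₀) (fx x) = dotProduct (gy y - gy y₀) (gx x) := by
    intro x y y₀
    set a : Y → ℝ := fun y => dotProduct (fx x) (fy y) with ha
    set b : Y → ℝ := fun y => dotProduct (gx x) (gy y) with hb
    have hS : (0:ℝ) < ∑ y', Real.exp (a y') :=
      Finset.sum_pos (fun i _ => Real.exp_pos _) Finset.univ_nonempty
    have hS' : (0:ℝ) < ∑ y', Real.exp (b y') :=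
      Finset.sum_pos (fun i _ => Real.exp_pos _) Finset.univ_nonempty
    have hmul : ∀ z : Y, Real.exp (a z) * (∑ y', Real.exp (b y'))
        = Real.exp (b z) * (∑ y', Real.exp (a y')) := by
      intro z
      have := h x z
      field_simp at this
      linarith [this]
    have h1 := hmul y
    have h2 := hmul y₀
    have hcancel : Real.exp (a y) * Real.exp (b y₀) = Real.exp (b y) * Real.exp (a y₀) := by
      have hmul2 : (Real.exp (a y) * Real.exp (b y₀)) * ((∑ y', Real.exp (a y')) * (∑ y', Real.exp (b y')))
          = (Real.exp (b y) * Real.exp (a y₀)) * ((∑ y', Real.exp (a y')) * (∑ y', Real.exp (b y'))) := by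
        calc (Real.exp (a y) * Real.exp (b y₀)) * ((∑ y', Real.exp (a y')) * (∑ y', Real.exp (b y')))
            = (Real.exp (a y) * (∑ y', Real.exp (b y'))) * (Real.exp (b y₀) * (∑ y', Real.exp (a y'))) := by ring
          _ = (Real.exp (b y) * (∑ y', Real.exp (a y'))) * (Real.exp (a y₀) * (∑ y', Real.exp (b y'))) := by
              rw [h1, ← h2]
          _ = (Real.exp (b y) * Real.exp (a y₀)) * ((∑ y', Real.exp (a y')) * (∑ y', Real.exp (b y'))) := by ring
      exact mul_right_cancel₀ (by positivity) hmul2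
    have hsum : a y + b y₀ = b y + a y₀ := by
      have := hcancel
      rw [← Real.exp_add, ← Real.exp_add] at this
      exact Real.exp_eq_exp.mp this
    have e1 : dotProduct (fy y - fy y₀) (fx x) = a y - a y₀ := by
      rw [sub_dotProduct, dotProduct_comm, dotProduct_comm (fy y₀)]
    have e2 : dotProduct (gy y - gy y₀) (gx x) = b y - b y₀ := by
      rw [sub_dotProduct, dotProduct_comm, dotProduct_comm (gy y₀)]
    rw [e1, e2]; linarith
  refine ⟨key, ?_⟩
  intro ys hdet
  set M : Matrix (Fin d) (Fin d) ℝ :=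
    Matrix.of fun i j : Fin d => fy (ys j.succ) i - fy (ys 0) i with hM
  set N : Matrix (Fin d) (Fin d) ℝ :=
    Matrix.of fun i j : Fin d => gy (ys j.succ) i - gy (ys 0) i with hN
  refine ⟨Mᵀ⁻¹ * Nᵀ, fun x => ?_⟩
  have hcol : Mᵀ *ᵥ fx x = Nᵀ *ᵥ gx x := by
    funext j
    have := key x (ys j.succ) (ys 0)
    simpa [Matrix.mulVec, dotProduct, Matrix.transpose_apply, hM, hN, sub_mul,
      Pi.sub_apply] using this
  have hinv : Mᵀ⁻¹ * Mᵀ = 1 := Matrix.nonsing_inv_mul _ (by simpa using hdet)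
  calc fx x = (Mᵀ⁻¹ * Mᵀ) *ᵥ fx x := by rw [hinv, Matrix.one_mulVec]
    _ = Mᵀ⁻¹ *ᵥ (Mᵀ *ᵥ fx x) := by rw [← Matrix.mulVec_mulVec]
    _ = Mᵀ⁻¹ *ᵥ (Nᵀ *ᵥ gx x) := by rw [hcol]
    _ = (Mᵀ⁻¹ * Nᵀ) *ᵥ gx x := by rw [Matrix.mulVec_mulVec]
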